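/- For all closed subspaces X and Y of a Hilbert space H, the preimage of Y under the orthogonal projection P_X onto X equals X^⊥ ⊕ (X ∩ Y), the closed span of X^⊥ and X ∩ Y. -/

import Mathlib

/-! Every `w` splits as `(w - P w) + P w` with `w - P w ∈ Xᗮ` and `P w ∈ X`, so `P w ∈ Y` exactly
when `w ∈ Xᗮ ⊔ (X ⊓ Y)`; this sum is then closed, being the preimage of the closed set `Y` under
the continuous map `P`. -/

namespace Submodule

variable {𝕜 E : Type*} [RCLike 𝕜] [NormedAddCommGroup E] [InnerProductSpace 𝕜 E]
  (K : Submodule 𝕜 E) [K.HasOrthogonalProjection] (Y : Submodule 𝕜 E)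

theorem comap_starProjection_eq_orthogonal_sup_inf :
    Y.comap (K.starProjection : E →ₗ[𝕜] E) = Kᗮ ⊔ (K ⊓ Y) := by
  apply le_antisymm
  · intro w (hw : K.starProjection w ∈ Y)
    have hK : K.starProjection w ∈ K ⊓ Y := ⟨K.starProjection_apply_mem w, hw⟩
    rw [← sub_add_cancel w (K.starProjection w)]
    exact add_mem (mem_sup_left (K.sub_starProjection_mem_orthogonal w)) (mem_sup_right hK)
  · refine sup_le (fun w hw => ?_) (fun w hw => ?_)
    · change K.starProjection w ∈ Y
      rw [(K.starProjection_apply_eq_zero_iff).mpr hw]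
      exact Y.zero_mem
    · change K.starProjection w ∈ Y
      rw [starProjection_eq_self_iff.mpr hw.1]
      exact hw.2

theorem isClosed_orthogonal_sup_inf (hY : IsClosed (Y : Set E)) :
    IsClosed ((Kᗮ ⊔ (K ⊓ Y) : Submodule 𝕜 E) : Set E) := by
  rw [← comap_starProjection_eq_orthogonal_sup_inf]
  exact hY.preimage K.starProjection.continuous

end Submodule

theorem stmt_5 {H : Type*} [NormedAddCommGroup H] [InnerProductSpace ℂ H]
    [CompleteSpace H] (X Y : Submodule ℂ H)
    (hX : IsClosed (X : Set H)) (hY : IsClosed (Y : Set H)) :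
    haveI : CompleteSpace X := hX.completeSpace_coe
    (fun w : H => (Submodule.orthogonalProjection X w : H)) ⁻¹' (Y : Set H) =
      (((Xᗮ ⊔ (X ⊓ Y)).topologicalClosure : Submodule ℂ H) : Set H) := by
  have : CompleteSpace X := hX.completeSpace_coe
  rw [(X.isClosed_orthogonal_sup_inf Y hY).submodule_topologicalClosure_eq,
    ← X.comap_starProjection_eq_orthogonal_sup_inf Y]
  rfl
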